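/- Let E be a real normed space, X ⊆ E nonempty and convex, L > 0. Let ω : E → ℝ be Fréchet differentiable with derivative Dω and 1-strongly convex with respect to ‖·‖ on X, i.e., the Bregman divergence D_ω(x', x) := ω(x') − ω(x) − Dω(x)(x' − x) satisfies D_ω(x', x) ≥ (1/2)‖x' − x‖² for all x, x' ∈ X. Let φ : X → ℝ be Fréchet differentiable with derivative Dφ, and let x, x⁺ ∈ X satisfy the Bregman proximal-point optimality condition: (1/(2L)) Dφ(x⁺)(x' − x⁺) + (Dω(x⁺) − Dω(x))(x' − x⁺) ≥ 0 for all x' ∈ X. Then the Bregman stationarity measure satisfies S_{X,ω}(x⁺, Dφ(x⁺), L)² ≤ 4L² ‖Dω(x⁺) − Dω(x)‖_*², where ‖·‖_* is the dual (operator) norm on the continuous dual of E. -/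
import Mathlib


/-- The Bregman stationarity measure `S_{X,ω}(x, ζ, L)`: the nonnegative real with
`S_{X,ω}(x, ζ, L)² = 2L · sup_{x' ∈ X} [ −ζ(x' − x) − L·D_ω(x', x) ]`, where
`D_ω(x', x) = ω(x') − ω(x) − Dω(x)(x' − x)` is the Bregman divergence of `ω`. -/
noncomputable def SBreg {E : Type*} [NormedAddCommGroup E] [NormedSpace ℝ E]
    (X : Set E) (ω : E → ℝ) (Dω : E → E →L[ℝ] ℝ) (x : E) (ζ : E →L[ℝ] ℝ) (L : ℝ) : ℝ :=
  Real.sqrt (2 * L * sSup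
    ((fun x' : E => -ζ (x' - x) - L * (ω x' - ω x - Dω x (x' - x))) '' X))

/-- if `ω` is Fréchet differentiable and 1-strongly convex w.r.t. `‖·‖`
on the nonempty convex set `X` (Bregman divergence bounded below by `(1/2)‖·‖²`),
`φ` is Fréchet differentiable on `X`, and `x⁺ ∈ X` satisfies the Bregman
proximal-point optimality condition
`(1/(2L)) Dφ(x⁺)(x' − x⁺) + (Dω(x⁺) − Dω(x))(x' − x⁺) ≥ 0` for all `x' ∈ X`, then
`S_{X,ω}(x⁺, Dφ(x⁺), L)² ≤ 4L²‖Dω(x⁺) − Dω(x)‖_*²` (dual/operator norm). -/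
theorem stmt_19 {E : Type*} [NormedAddCommGroup E] [NormedSpace ℝ E]
    (X : Set E) (hne : X.Nonempty) (hconv : Convex ℝ X)
    (L : ℝ) (hL : 0 < L)
    (ω : E → ℝ) (Dω : E → E →L[ℝ] ℝ) (hω : ∀ x : E, HasFDerivAt ω (Dω x) x)
    (hsc : ∀ x ∈ X, ∀ x' ∈ X, (1 / 2) * ‖x' - x‖ ^ 2 ≤ ω x' - ω x - Dω x (x' - x))
    (φ : E → ℝ) (Dφ : E → E →L[ℝ] ℝ) (hφ : ∀ x ∈ X, HasFDerivAt φ (Dφ x) x)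
    (x xplus : E) (hx : x ∈ X) (hxplus : xplus ∈ X)
    (hopt : ∀ x' ∈ X,
      0 ≤ (1 / (2 * L)) * Dφ xplus (x' - xplus) + (Dω xplus - Dω x) (x' - xplus)) :
    (SBreg X ω Dω xplus (Dφ xplus) L) ^ 2 ≤ 4 * L ^ 2 * ‖Dω xplus - Dω x‖ ^ 2 := by
  set g := Dω xplus - Dω x with hg
  have hgnn : (0:ℝ) ≤ ‖g‖ := norm_nonneg _
  have hRnn : (0:ℝ) ≤ 4 * L ^ 2 * ‖g‖ ^ 2 := by positivity
  have hbound : ∀ y ∈ (fun x' : E => -(Dφ xplus) (x' - xplus)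
      - L * (ω x' - ω xplus - Dω xplus (x' - xplus))) '' X, y ≤ 2 * L * ‖g‖ ^ 2 := by
    rintro y ⟨x', hx', rfl⟩
    dsimp only
    have h1 := hopt x' hx'
    have h2 := hsc xplus hxplus x' hx'
    have h3 : g (x' - xplus) ≤ ‖g‖ * ‖x' - xplus‖ :=
      le_trans (le_abs_self _) (g.le_opNorm _)
    set A := (Dφ xplus) (x' - xplus) with hA
    set B := g (x' - xplus) with hB
    have h4 : -A ≤ 2 * L * B := by
      have hLne : (2 * L) ≠ 0 := by positivity
      have h := mul_le_mul_of_nonneg_left h1 (by positivity : (0:ℝ) ≤ 2 * L)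
      rw [mul_zero, mul_add, ← mul_assoc, mul_one_div, div_self hLne, one_mul] at h
      linarith
    have hnn : (0:ℝ) ≤ ‖x' - xplus‖ := norm_nonneg _
    nlinarith [sq_nonneg (‖x' - xplus‖ - 2 * ‖g‖), mul_le_mul_of_nonneg_left h3
      (le_of_lt (by linarith : (0:ℝ) < 2 * L))]
  have hsup : sSup ((fun x' : E => -(Dφ xplus) (x' - xplus)
      - L * (ω x' - ω xplus - Dω xplus (x' - xplus))) '' X) ≤ 2 * L * ‖g‖ ^ 2 :=
    Real.sSup_le hbound (by positivity)
  have hkey : 2 * L * sSup ((fun x' : E => -(Dφ xplus) (x' - xplus)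
      - L * (ω x' - ω xplus - Dω xplus (x' - xplus))) '' X) ≤ 4 * L ^ 2 * ‖g‖ ^ 2 := by
    nlinarith
  unfold SBreg
  calc Real.sqrt (2 * L * sSup ((fun x' : E => -(Dφ xplus) (x' - xplus)
        - L * (ω x' - ω xplus - Dω xplus (x' - xplus))) '' X)) ^ 2
      ≤ Real.sqrt (4 * L ^ 2 * ‖g‖ ^ 2) ^ 2 :=
        pow_le_pow_left₀ (Real.sqrt_nonneg _) (Real.sqrt_le_sqrt hkey) 2
    _ = 4 * L ^ 2 * ‖g‖ ^ 2 := Real.sq_sqrt hRnn
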